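/- For the root system A_n (n ≥ 2) and P_1 = ∑_{j=2}^{n+1} M(e_1 − e_j) − 2Iₙ, one has Q[P_1] = ∑_{r∈A_n} P_1[r]² = 2n(n−1)(n+1) and Tr(P_1²) = n(n−1); hence the eigenvalue of Q associated with P_1 equals 2(n+1). -/

import Mathlib

open Matrix
open scoped Classical

/-- The root system `Aₙ = {±(eᵢ − eⱼ) : i ≠ j} ⊆ ℝ^{n+1}`. -/
noncomputable def ARoots (n : ℕ) : Finset (Fin (n + 1) → ℝ) :=
  Finset.image (fun p : Fin (n + 1) × Fin (n + 1) =>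
      Pi.single p.1 (1 : ℝ) - Pi.single p.2 1)
    (Finset.univ.filter fun p => p.1 ≠ p.2)

/-- Orthogonal projection of `ℝ^{n+1}` onto the hyperplane `{v : ∑ vᵢ = 0}`
(the identity on the span of the root system `Aₙ`). -/
noncomputable def projA (n : ℕ) : Matrix (Fin (n + 1)) (Fin (n + 1)) ℝ :=
  1 - ((n : ℝ) + 1)⁻¹ • Matrix.of fun _ _ => (1 : ℝ)

/-- `Pᵢ = ∑_{j ≠ i} (eᵢ − eⱼ)(eᵢ − eⱼ)ᵀ − 2·Iₙ`, where `Iₙ` is the identity on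
the span of `Aₙ`. -/
noncomputable def PA (n : ℕ) (i : Fin (n + 1)) : Matrix (Fin (n + 1)) (Fin (n + 1)) ℝ :=
  (∑ j ∈ Finset.univ.erase i,
      Matrix.vecMulVec (Pi.single i 1 - Pi.single j 1) (Pi.single i 1 - Pi.single j 1))
    - (2 : ℝ) • projA n

/-!
Split the indices into `i` and the others `i.succAbove k`. In these coordinates `P_i` has
entries `n - 2 + c`, `-1 + c` (row and column of `i`, and the rest of the diagonal) and `c`
elsewhere, where `c = 2 / (n + 1)`. Hence the quadratic form is `n - 1` on the `2n` roots
`±(e_i - e_j)` and `-2` on the `n(n - 1)` remaining roots, so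
`Q[P_i] = 2n(n - 1)² + 4n(n - 1) = 2n(n - 1)(n + 1)`, while `Tr(P_i²)` is the sum of the
squared entries.
-/

open Finset

lemma Matrix.single_sub_single_dotProduct_mulVec {ι R : Type*} [Fintype ι] [DecidableEq ι]
    [CommRing R] (M : Matrix ι ι R) (a b : ι) :
    (Pi.single a 1 - Pi.single b 1) ⬝ᵥ (M *ᵥ (Pi.single a 1 - Pi.single b 1))
      = M a a - M a b - M b a + M b b := by
  simp only [mulVec_sub, mulVec_single, MulOpposite.op_one, one_smul, dotProduct_sub,
    sub_dotProduct, single_dotProduct, col_apply, one_mul]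
  ring

lemma Pi.single_sub_single_injOn {ι R : Type*} [DecidableEq ι] [Ring R] [CharZero R] :
    Set.InjOn (fun p : ι × ι => (Pi.single p.1 1 - Pi.single p.2 1 : ι → R)) {p | p.1 ≠ p.2} := by
  rintro ⟨a, b⟩ hab ⟨c, d⟩ hcd h
  have h1 := congrFun h a
  have h2 := congrFun h b
  simp only [ne_eq, Set.mem_ofPred_eq, sub_apply, single_eq_same, single_apply] at hab hcd h1 h2
  split_ifs at h1 h2 <;> simp_all [eq_sub_iff_add_eq]; norm_num at h2

lemma Fin.sum_ite_eq_zero_else {R : Type*} [Ring R] {n : ℕ} (k : Fin n) (c : R) :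
    ∑ l, (if k = l then 0 else c) = ((n : R) - 1) * c := by
  have h : ∀ l, (if k = l then 0 else c) = c - if k = l then c else 0 := by
    intro l
    split_ifs <;> simp
  simp [h, sum_sub_distrib, sub_mul]

lemma sum_ARoots {M : Type*} [AddCommMonoid M] (n : ℕ) (f : (Fin (n + 1) → ℝ) → M)
    (hf : f 0 = 0) :
    ∑ r ∈ ARoots n, f r = ∑ a, ∑ b, f (Pi.single a 1 - Pi.single b 1) := by
  rw [ARoots, sum_image fun p hp q hq h =>
      Pi.single_sub_single_injOn (by simpa using hp) (by simpa using hq) h,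
    sum_filter, Fintype.sum_prod_type]
  refine sum_congr rfl fun a _ => sum_congr rfl fun b _ => ?_
  rcases eq_or_ne a b with rfl | hab
  · simp [hf]
  · simp [hab]

lemma PA_apply (n : ℕ) (i a b : Fin (n + 1)) :
    PA n i a b = ∑ j, (Pi.single i 1 - Pi.single j 1 : Fin (n + 1) → ℝ) a *
        (Pi.single i 1 - Pi.single j 1 : Fin (n + 1) → ℝ) b
      - 2 * ((if a = b then 1 else 0) - ((n : ℝ) + 1)⁻¹) := by
  simp [PA, projA, Matrix.sum_apply, Matrix.one_apply, vecMulVec_apply]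

section Entries

variable (n : ℕ) (i : Fin (n + 1)) (k l : Fin n)

lemma PA_apply_self : PA n i i i = n - 2 + 2 / ((n : ℝ) + 1) := by
  simp only [PA_apply, Pi.sub_apply, Pi.single_eq_same, Pi.single_apply,
    Fin.sum_univ_succAbove _ i, ↓reduceIte, sub_self, mul_zero, Fin.ne_succAbove, sub_zero,
    mul_one, sum_const, card_univ, Fintype.card_fin, nsmul_eq_mul, zero_add]
  ring

lemma PA_apply_self_succAbove : PA n i i (i.succAbove k) = -1 + 2 / ((n : ℝ) + 1) := by
  simp only [PA_apply, Pi.sub_apply, Pi.single_eq_same, Pi.single_apply, Fin.succAbove_ne,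
    zero_sub, mul_neg, mul_ite, mul_one, mul_zero, Fin.sum_univ_succAbove _ i, ↓reduceIte, neg_zero, Fin.succAbove_inj,
    Fin.ne_succAbove, sub_zero, sum_neg_distrib, sum_ite_eq, mem_univ, zero_add, sub_neg_eq_add,
    add_right_inj]
  ring

lemma PA_apply_succAbove_self : PA n i (i.succAbove k) i = -1 + 2 / ((n : ℝ) + 1) := by
  simp only [PA_apply, Pi.sub_apply, ne_eq, Fin.succAbove_ne, not_false_eq_true,
    Pi.single_eq_of_ne, Pi.single_apply, zero_sub, neg_mul, ite_mul, one_mul,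
    zero_mul, Fin.sum_univ_succAbove _ i, ↓reduceIte, neg_zero, Fin.succAbove_inj,
    Fin.ne_succAbove, sub_zero, sum_neg_distrib, sum_ite_eq, mem_univ, zero_add, mul_neg,
    sub_neg_eq_add, add_right_inj]
  ring

lemma PA_apply_succAbove_succAbove :
    PA n i (i.succAbove k) (i.succAbove l) = 2 / ((n : ℝ) + 1) - if k = l then 1 else 0 := by
  simp only [PA_apply, Pi.sub_apply, ne_eq, Fin.succAbove_ne, not_false_eq_true,
    Pi.single_eq_of_ne, Pi.single_apply, zero_sub, mul_neg, mul_ite, mul_one, mul_zero,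
    Fin.sum_univ_succAbove _ i, ↓reduceIte, neg_zero, Fin.succAbove_inj, sum_neg_distrib,
    sum_ite_eq, mem_univ, neg_neg, zero_add]
  ring

lemma PA_quadform_single_sub_succAbove :
    (Pi.single i 1 - Pi.single (i.succAbove k) 1 : Fin (n + 1) → ℝ) ⬝ᵥ
      (PA n i *ᵥ (Pi.single i 1 - Pi.single (i.succAbove k) 1)) = n - 1 := by
  rw [Matrix.single_sub_single_dotProduct_mulVec, PA_apply_self, PA_apply_self_succAbove,
    PA_apply_succAbove_self, PA_apply_succAbove_succAbove, if_pos rfl]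
  ring

lemma PA_quadform_succAbove_sub_single :
    (Pi.single (i.succAbove k) 1 - Pi.single i 1 : Fin (n + 1) → ℝ) ⬝ᵥ
      (PA n i *ᵥ (Pi.single (i.succAbove k) 1 - Pi.single i 1)) = n - 1 := by
  rw [Matrix.single_sub_single_dotProduct_mulVec, PA_apply_self, PA_apply_self_succAbove,
    PA_apply_succAbove_self, PA_apply_succAbove_succAbove, if_pos rfl]
  ring

lemma PA_quadform_succAbove_sub_succAbove :
    (Pi.single (i.succAbove k) 1 - Pi.single (i.succAbove l) 1 : Fin (n + 1) → ℝ) ⬝ᵥ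
      (PA n i *ᵥ (Pi.single (i.succAbove k) 1 - Pi.single (i.succAbove l) 1))
        = if k = l then 0 else -2 := by
  simp only [Matrix.single_sub_single_dotProduct_mulVec, PA_apply_succAbove_succAbove,
    eq_comm (a := l)]
  split_ifs <;> ring

lemma sum_ARoots_PA_quadform_sq :
    ∑ r ∈ ARoots n, (r ⬝ᵥ (PA n i *ᵥ r)) ^ 2 = 2 * n * ((n : ℝ) - 1) * ((n : ℝ) + 1) := by
  rw [sum_ARoots n (fun r => (r ⬝ᵥ (PA n i *ᵥ r)) ^ 2) (by simp)]
  simp only [Fin.sum_univ_succAbove _ i, PA_quadform_single_sub_succAbove,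
    PA_quadform_succAbove_sub_single, PA_quadform_succAbove_sub_succAbove, sub_self,
    zero_dotProduct]
  simp only [ne_eq, OfNat.ofNat_ne_zero, not_false_eq_true, zero_pow, sum_const, card_univ,
    Fintype.card_fin, nsmul_eq_mul, zero_add, ite_pow, even_two, Even.neg_pow,
    Fin.sum_ite_eq_zero_else, smul_add]
  ring

lemma trace_PA_mul_self : trace (PA n i * PA n i) = n * ((n : ℝ) - 1) := by
  simp only [trace, diag_apply, mul_apply, Fin.sum_univ_succAbove _ i]
  simp only [PA_apply_self, PA_apply_self_succAbove, PA_apply_succAbove_self,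
    PA_apply_succAbove_succAbove, sum_const, card_univ, Fintype.card_fin, nsmul_eq_mul, mul_sub,
    sub_mul, ite_mul, one_mul, zero_mul, mul_ite, mul_one, mul_zero, sum_sub_distrib, sum_ite_eq,
    mem_univ, ↓reduceIte, sum_ite_eq', smul_add]
  field_simp
  ring

end Entries

theorem PA_quadform_eigenvalue_general {n : ℕ} :
    (∑ r ∈ ARoots n, (r ⬝ᵥ (PA n 0 *ᵥ r)) ^ 2 = 2 * n * ((n : ℝ) - 1) * ((n : ℝ) + 1)) ∧
      Matrix.trace (PA n 0 * PA n 0) = n * ((n : ℝ) - 1) ∧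
      ∑ r ∈ ARoots n, (r ⬝ᵥ (PA n 0 *ᵥ r)) ^ 2
        = 2 * ((n : ℝ) + 1) * Matrix.trace (PA n 0 * PA n 0) := by
  refine ⟨sum_ARoots_PA_quadform_sq n 0, trace_PA_mul_self n 0, ?_⟩
  rw [sum_ARoots_PA_quadform_sq, trace_PA_mul_self]
  ring

theorem PA_quadform_eigenvalue {n : ℕ} (hn : 2 ≤ n) :
    (∑ r ∈ ARoots n, (r ⬝ᵥ (PA n 0 *ᵥ r)) ^ 2 = 2 * n * ((n : ℝ) - 1) * ((n : ℝ) + 1)) ∧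
      Matrix.trace (PA n 0 * PA n 0) = n * ((n : ℝ) - 1) ∧
      ∑ r ∈ ARoots n, (r ⬝ᵥ (PA n 0 *ᵥ r)) ^ 2
        = 2 * ((n : ℝ) + 1) * Matrix.trace (PA n 0 * PA n 0) :=
  PA_quadform_eigenvalue_general
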